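/- Let (B, μ) be a finite measure space, let θ, s : B × ℝ → ℝ be measurable, with λ ↦ θ(x,λ) and λ ↦ s(x,λ) continuous on [0,1] for each x and the relevant functions integrable over B × [0,1], let A(x,λ) = exp(∫₀^λ θ(x,μ) dμ), and let λ∞ : B → [0,1] be measurable. If s(x,λ) ≤ -θ(x,λ)/4 for every x ∈ B and every λ ∈ [0, λ∞(x)], then ∫_B ∫₀^{λ∞(x)} s(x,λ)·A(x,λ) dλ dμ(x) ≤ (1/4)·(μ(B) - ∫_B A(x, λ∞(x)) dμ(x)). -/

import Mathlib

open Set MeasureTheory intervalIntegral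

/-!
Along each generator the area factor `A = exp (∫ θ)` solves `A' = θ A` with `A(0) = 1`, so the
condition `s ≤ -θ/4` together with `A > 0` gives
`∫₀^λ∞ s A ≤ -(1/4) ∫₀^λ∞ θ A = (1/4) (1 - A(λ∞))`. Integrating this over `B` gives the bound.
-/

section ExpPrimitive

variable {f g : ℝ → ℝ} {a b : ℝ}

theorem hasDerivAt_exp_primitive (hf : ContinuousOn f (Icc a b)) {t : ℝ} (ht : t ∈ Ioo a b) :
    HasDerivAt (fun u => Real.exp (∫ v in a..u, f v))
      (Real.exp (∫ v in a..t, f v) * f t) t := by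
  have hnhds : Icc a b ∈ nhds t := Icc_mem_nhds ht.1 ht.2
  have hprim : HasDerivAt (fun u => ∫ v in a..u, f v) (f t) t :=
    integral_hasDerivAt_right
      ((hf.mono (Icc_subset_Icc_right ht.2.le)).intervalIntegrable_of_Icc ht.1.le)
      ((hf.mono Ioo_subset_Icc_self).stronglyMeasurableAtFilter isOpen_Ioo t ht)
      (hf.continuousAt hnhds)
  exact hprim.exp

theorem continuousOn_exp_primitive (hab : a ≤ b) (hf : ContinuousOn f (Icc a b)) :
    ContinuousOn (fun u => Real.exp (∫ v in a..u, f v)) (Icc a b) := by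
  have hint : IntegrableOn f (uIcc a b) := by
    rw [uIcc_of_le hab]
    exact hf.integrableOn_Icc
  rw [← uIcc_of_le hab]
  exact Real.continuous_exp.comp_continuousOn (continuousOn_primitive_interval hint)

theorem integral_mul_exp_primitive (hab : a ≤ b) (hf : ContinuousOn f (Icc a b)) :
    ∫ t in a..b, f t * Real.exp (∫ v in a..t, f v) = Real.exp (∫ v in a..b, f v) - 1 := by
  have hcont := continuousOn_exp_primitive hab hf
  have hint : IntervalIntegrable (fun t => f t * Real.exp (∫ v in a..t, f v)) volume a b :=
    (hf.mul hcont).intervalIntegrable_of_Icc hab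
  rw [integral_eq_sub_of_hasDerivAt_of_le hab hcont
    (fun t ht => by simpa only [mul_comm] using hasDerivAt_exp_primitive hf ht) hint]
  simp

theorem integral_mul_exp_primitive_le (hab : a ≤ b) (hf : ContinuousOn f (Icc a b))
    (hg : ContinuousOn g (Icc a b)) {c : ℝ} (hgf : ∀ t ∈ Icc a b, g t ≤ c * f t) :
    ∫ t in a..b, g t * Real.exp (∫ v in a..t, f v)
      ≤ c * (Real.exp (∫ v in a..b, f v) - 1) := by
  have hcont := continuousOn_exp_primitive hab hf
  calc ∫ t in a..b, g t * Real.exp (∫ v in a..t, f v)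
      ≤ ∫ t in a..b, c * (f t * Real.exp (∫ v in a..t, f v)) := by
        refine integral_mono_on hab ((hg.mul hcont).intervalIntegrable_of_Icc hab)
          ((continuousOn_const.mul (hf.mul hcont)).intervalIntegrable_of_Icc hab) fun t ht => ?_
        rw [← mul_assoc]
        exact mul_le_mul_of_nonneg_right (hgf t ht) (Real.exp_pos _).le
    _ = c * (Real.exp (∫ v in a..b, f v) - 1) := by
        rw [intervalIntegral.integral_const_mul, integral_mul_exp_primitive hab hf]

end ExpPrimitive

theorem generalized_entropy_bound_light_sheet_general
    {B : Type*} [MeasurableSpace B] (μ : Measure B) [IsFiniteMeasure μ]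
    (θ s : B × ℝ → ℝ)
    (hθcont : ∀ x : B, ContinuousOn (fun l => θ (x, l)) (Icc 0 1))
    (hscont : ∀ x : B, ContinuousOn (fun l => s (x, l)) (Icc 0 1))
    (A : B × ℝ → ℝ)
    (hA : ∀ x : B, ∀ l : ℝ, A (x, l) = Real.exp (∫ m in (0:ℝ)..l, θ (x, m)))
    (lInf : B → ℝ)
    (hlInfmem : ∀ x : B, lInf x ∈ Icc (0:ℝ) 1)
    -- integrability of the relevant functions
    (hint₂ : Integrable (fun x : B => ∫ l in (0:ℝ)..(lInf x), s (x, l) * A (x, l)) μ)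
    (hint₃ : Integrable (fun x : B => A (x, lInf x)) μ)
    -- condition (A) along each generator
    (hcond : ∀ x : B, ∀ l ∈ Icc (0:ℝ) (lInf x), s (x, l) ≤ -θ (x, l) / 4) :
    (∫ x, (∫ l in (0:ℝ)..(lInf x), s (x, l) * A (x, l)) ∂μ)
      ≤ (1/4) * ((μ univ).toReal - ∫ x, A (x, lInf x) ∂μ) := by
  have generator_bound : ∀ x, ∫ l in (0:ℝ)..(lInf x), s (x, l) * A (x, l)
      ≤ (1/4) * (1 - A (x, lInf x)) := fun x => by
    have hsub : Icc 0 (lInf x) ⊆ Icc 0 1 := Icc_subset_Icc_right (hlInfmem x).2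
    simp only [hA]
    linarith [integral_mul_exp_primitive_le (hlInfmem x).1 ((hθcont x).mono hsub)
      ((hscont x).mono hsub) (c := -1/4) fun l hl => by linarith [hcond x l hl]]
  calc (∫ x, (∫ l in (0:ℝ)..(lInf x), s (x, l) * A (x, l)) ∂μ)
      ≤ ∫ x, (1/4) * (1 - A (x, lInf x)) ∂μ :=
        integral_mono hint₂ (((integrable_const 1).sub hint₃).const_mul _) generator_bound
    _ = (1/4) * ((μ univ).toReal - ∫ x, A (x, lInf x) ∂μ) := by
        rw [MeasureTheory.integral_const_mul, integral_sub (integrable_const 1) hint₃, MeasureTheory.integral_const,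
          smul_eq_mul, mul_one, Measure.real]

/-- Sufficiency direction of Proposition 1: on a light sheet over a base
surface `B` with finite area measure `μ`, if `s(x,λ) ≤ -θ(x,λ)/4` holds
everywhere along each generator up to its endpoint `λ∞ x`, then the total
entropy through the light sheet is bounded by one quarter of the area
decrease `μ(B) - A_{B'}`. -/
theorem generalized_entropy_bound_light_sheet
    {B : Type*} [MeasurableSpace B] (μ : Measure B) [IsFiniteMeasure μ]
    (θ s : B × ℝ → ℝ)
    (hθmeas : Measurable θ) (hsmeas : Measurable s)
    (hθcont : ∀ x : B, ContinuousOn (fun l => θ (x, l)) (Icc 0 1))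
    (hscont : ∀ x : B, ContinuousOn (fun l => s (x, l)) (Icc 0 1))
    (A : B × ℝ → ℝ)
    (hA : ∀ x : B, ∀ l : ℝ, A (x, l) = Real.exp (∫ m in (0:ℝ)..l, θ (x, m)))
    (lInf : B → ℝ) (hlInf : Measurable lInf)
    (hlInfmem : ∀ x : B, lInf x ∈ Icc (0:ℝ) 1)
    -- integrability of the relevant functions
    (hint₁ : Integrable (fun p : B × ℝ => s p * A p)
      (μ.prod (volume.restrict (Icc (0:ℝ) 1))))
    (hint₂ : Integrable (fun x : B => ∫ l in (0:ℝ)..(lInf x), s (x, l) * A (x, l)) μ)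
    (hint₃ : Integrable (fun x : B => A (x, lInf x)) μ)
    -- condition (A) along each generator
    (hcond : ∀ x : B, ∀ l ∈ Icc (0:ℝ) (lInf x), s (x, l) ≤ -θ (x, l) / 4) :
    (∫ x, (∫ l in (0:ℝ)..(lInf x), s (x, l) * A (x, l)) ∂μ)
      ≤ (1/4) * ((μ univ).toReal - ∫ x, A (x, lInf x) ∂μ) :=
  generalized_entropy_bound_light_sheet_general μ θ s hθcont hscont A hA lInf hlInfmem hint₂ hint₃
    hcond
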